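/- arXiv:2106.06419 — 2 statements merged into one kernel-verified Lean document; each statement's English description precedes it below -/
import Mathlib

section
/- Let ũ(t,x) be a C² function on (0,∞) × ℝ² and set Y(t,x) = |∂Γ^{≤1}ũ(t,x)| + (r+t)|□ũ(t,x)| with r = |x|, where Γ ranges over {∂_t, ∂₁, ∂₂, ∂_θ, L₀} with L₀ = t∂_t + r∂_r. Then pointwise for r > 0, t ≥ 0: ⟨r-t⟩(|∂_{tt}ũ| + |∂_t∇ũ| + |Δũ|) ≲ Y(t,x). -/
set_option maxHeartbeats 2000000

noncomputable section

/-- Partial derivative `∂_i` on (2+1)-dimensional spacetime, `i = 0` being time. -/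
def pd (i : Fin 3) (f : (Fin 3 → ℝ) → ℝ) : (Fin 3 → ℝ) → ℝ :=
  fun x => fderiv ℝ f x (Pi.single i 1)

/-- Spatial radius `r = |x|`. -/
def rr (x : Fin 3 → ℝ) : ℝ := Real.sqrt ((x 1)^2 + (x 2)^2)

/-- `ω₀ = -1`, `ωᵢ = xᵢ/r` for `i = 1,2`. -/
def omg (x : Fin 3 → ℝ) : Fin 3 → ℝ := ![(-1 : ℝ), x 1 / rr x, x 2 / rr x]

/-- Good derivatives `T_i = ω_i ∂_t + ∂_i` (note `T₀ = 0`). -/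
def Tgood (i : Fin 3) (f : (Fin 3 → ℝ) → ℝ) : (Fin 3 → ℝ) → ℝ :=
  fun x => omg x i * pd 0 f x + pd i f x

/-- The null vector `(-1, cos θ, sin θ)`. -/
def nullv (θ : ℝ) : Fin 3 → ℝ := ![(-1 : ℝ), Real.cos θ, Real.sin θ]

def dAng (f : (Fin 3 → ℝ) → ℝ) : (Fin 3 → ℝ) → ℝ :=
  fun x => x 1 * pd 2 f x - x 2 * pd 1 f x

/-- Scaling field `L₀ = t∂_t + r∂_r = t∂_t + x·∇`. -/
def Lzero (f : (Fin 3 → ℝ) → ℝ) : (Fin 3 → ℝ) → ℝ :=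
  fun x => x 0 * pd 0 f x + x 1 * pd 1 f x + x 2 * pd 2 f x

/-- The admissible vector fields `Γ = {∂_t, ∂₁, ∂₂, ∂_θ, L₀}` (no Lorentz boosts). -/
def Gam : Fin 5 → ((Fin 3 → ℝ) → ℝ) → ((Fin 3 → ℝ) → ℝ) :=
  ![pd 0, pd 1, pd 2, dAng, Lzero]

/-- The d'Alembertian `□ = ∂_{tt} - Δ`. -/
def box (f : (Fin 3 → ℝ) → ℝ) : (Fin 3 → ℝ) → ℝ :=
  fun x => pd 0 (pd 0 f) x - pd 1 (pd 1 f) x - pd 2 (pd 2 f) x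

/-- `Y = |∂Γ^{≤1}ũ| + (r+t)|□ũ|`. -/
def Yks (u : (Fin 3 → ℝ) → ℝ) (x : Fin 3 → ℝ) : ℝ :=
  (∑ k : Fin 3, |pd k u x|) +
  (∑ k : Fin 3, ∑ a : Fin 5, |pd k (Gam a u) x|) +
  (rr x + x 0) * |box u x|

/-- Japanese bracket. -/
def jb (s : ℝ) : ℝ := Real.sqrt (1 + s^2)

namespace KS2DProof

variable {u : (Fin 3 → ℝ) → ℝ}

lemma contDiff_pd (hu : ContDiff ℝ 2 u) (j : Fin 3) : ContDiff ℝ 1 (pd j u) := by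
  have h : ContDiff ℝ 1 (fderiv ℝ u) := hu.fderiv_right (by norm_num)
  exact h.clm_apply contDiff_const

lemma diff_pd (hu : ContDiff ℝ 2 u) (j : Fin 3) : Differentiable ℝ (pd j u) :=
  (contDiff_pd hu j).differentiable (by norm_num)

lemma pd_pd_eq (hu : ContDiff ℝ 2 u) (i j : Fin 3) (x : Fin 3 → ℝ) :
    pd i (pd j u) x = fderiv ℝ (fderiv ℝ u) x (Pi.single i 1) (Pi.single j 1) := by
  have hdiff : DifferentiableAt ℝ (fderiv ℝ u) x :=
    ((hu.fderiv_right (m := 1) (by norm_num)).differentiable (by norm_num)) x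
  have h : fderiv ℝ (fun y => fderiv ℝ u y (Pi.single j 1)) x =
      (fderiv ℝ (fderiv ℝ u) x).flip (Pi.single j 1) := by
    rw [fderiv_clm_apply hdiff (differentiableAt_const _)]
    simp
  show fderiv ℝ (fun y => fderiv ℝ u y (Pi.single j 1)) x (Pi.single i 1) = _
  rw [h]
  rfl

lemma schwarz (hu : ContDiff ℝ 2 u) (i j : Fin 3) (x : Fin 3 → ℝ) :
    pd i (pd j u) x = pd j (pd i u) x := by
  rw [pd_pd_eq hu, pd_pd_eq hu]
  exact hu.contDiffAt.isSymmSndFDerivAt (by norm_num) _ _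

def sg (k i : Fin 3) : ℝ := (Pi.single k (1:ℝ) : Fin 3 → ℝ) i

lemma sg00 : sg 0 0 = 1 := by simp [sg, Pi.single_apply]
lemma sg01 : sg 0 1 = 0 := by simp [sg, Pi.single_apply]
lemma sg02 : sg 0 2 = 0 := by simp [sg, Pi.single_apply]
lemma sg10 : sg 1 0 = 0 := by simp [sg, Pi.single_apply]
lemma sg11 : sg 1 1 = 1 := by simp [sg, Pi.single_apply]
lemma sg12 : sg 1 2 = 0 := by simp [sg, Pi.single_apply]
lemma sg20 : sg 2 0 = 0 := by simp [sg, Pi.single_apply]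
lemma sg21 : sg 2 1 = 0 := by simp [sg, Pi.single_apply]
lemma sg22 : sg 2 2 = 1 := by simp [sg, Pi.single_apply]

lemma proj_hasFDeriv (i : Fin 3) (x : Fin 3 → ℝ) :
    HasFDerivAt (fun y : Fin 3 → ℝ => y i)
      (ContinuousLinearMap.proj (R := ℝ) (φ := fun _ : Fin 3 => ℝ) i) x :=
  hasFDerivAt_apply i x

lemma pd_Lzero (hu : ContDiff ℝ 2 u) (k : Fin 3) (x : Fin 3 → ℝ) :
    pd k (Lzero u) x =
      sg k 0 * pd 0 u x + x 0 * pd k (pd 0 u) x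
    + sg k 1 * pd 1 u x + x 1 * pd k (pd 1 u) x
    + sg k 2 * pd 2 u x + x 2 * pd k (pd 2 u) x := by
  have hp : ∀ j : Fin 3, HasFDerivAt (pd j u) (fderiv ℝ (pd j u) x) x :=
    fun j => ((diff_pd hu j) x).hasFDerivAt
  have H := (((proj_hasFDeriv 0 x).mul (hp 0)).add ((proj_hasFDeriv 1 x).mul (hp 1))).add
      ((proj_hasFDeriv 2 x).mul (hp 2))
  have hf := H.fderiv
  show fderiv ℝ (Lzero u) x (Pi.single k 1) = _
  rw [show Lzero u = (fun y : Fin 3 → ℝ => y 0) * pd 0 u + (fun y => y 1) * pd 1 u + (fun y => y 2) * pd 2 u from rfl, hf]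
  simp [ContinuousLinearMap.add_apply, ContinuousLinearMap.smul_apply, pd, sg]
  ring

lemma pd_dAng (hu : ContDiff ℝ 2 u) (k : Fin 3) (x : Fin 3 → ℝ) :
    pd k (dAng u) x =
      sg k 1 * pd 2 u x + x 1 * pd k (pd 2 u) x
    - sg k 2 * pd 1 u x - x 2 * pd k (pd 1 u) x := by
  have hp : ∀ j : Fin 3, HasFDerivAt (pd j u) (fderiv ℝ (pd j u) x) x :=
    fun j => ((diff_pd hu j) x).hasFDerivAt
  have H := ((proj_hasFDeriv 1 x).mul (hp 2)).sub ((proj_hasFDeriv 2 x).mul (hp 1))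
  have hf := H.fderiv
  show fderiv ℝ (dAng u) x (Pi.single k 1) = _
  rw [show dAng u = (fun y : Fin 3 → ℝ => y 1) * pd 2 u - (fun y => y 2) * pd 1 u from rfl, hf]
  simp [ContinuousLinearMap.add_apply, ContinuousLinearMap.smul_apply, pd, sg]
  ring

lemma key1 (hu : ContDiff ℝ 2 u) (x : Fin 3 → ℝ) :
    (x 0 ^ 2 - (x 1 ^ 2 + x 2 ^ 2)) * pd 0 (pd 0 u) x =
      x 0 * pd 0 (Lzero u) x + (-(x 0)) * pd 0 u x + (-(x 1)) * pd 1 (Lzero u) x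
      + (-(x 2)) * pd 2 (Lzero u) x + (-(x 1)) * pd 2 (dAng u) x + x 2 * pd 1 (dAng u) x
      + (-(x 1 ^ 2 + x 2 ^ 2)) * box u x := by
  rw [pd_Lzero hu 0 x, pd_Lzero hu 1 x, pd_Lzero hu 2 x, pd_dAng hu 1 x, pd_dAng hu 2 x]
  simp only [sg00, sg01, sg02, sg10, sg11, sg12, sg20, sg21, sg22, box,
    schwarz hu 1 0 x, schwarz hu 2 0 x, schwarz hu 2 1 x]
  ring

lemma key2 (hu : ContDiff ℝ 2 u) (x : Fin 3 → ℝ) :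
    (x 0 ^ 2 - (x 1 ^ 2 + x 2 ^ 2)) * pd 0 (pd 1 u) x =
      x 0 * pd 1 (Lzero u) x + (-(x 1)) * pd 0 (Lzero u) x + x 1 * pd 0 u x
      + x 2 * pd 0 (dAng u) x + x 0 * pd 2 (dAng u) x + (x 0 * x 1) * box u x := by
  rw [pd_Lzero hu 0 x, pd_Lzero hu 1 x, pd_dAng hu 0 x, pd_dAng hu 2 x]
  simp only [sg00, sg01, sg02, sg10, sg11, sg12, sg20, sg21, sg22, box,
    schwarz hu 1 0 x, schwarz hu 2 0 x, schwarz hu 2 1 x]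
  ring

lemma key3 (hu : ContDiff ℝ 2 u) (x : Fin 3 → ℝ) :
    (x 0 ^ 2 - (x 1 ^ 2 + x 2 ^ 2)) * pd 0 (pd 2 u) x =
      x 0 * pd 2 (Lzero u) x + (-(x 2)) * pd 0 (Lzero u) x + x 2 * pd 0 u x
      + (-(x 1)) * pd 0 (dAng u) x + (-(x 0)) * pd 1 (dAng u) x
      + (x 0 * x 2) * box u x := by
  rw [pd_Lzero hu 0 x, pd_Lzero hu 2 x, pd_dAng hu 0 x, pd_dAng hu 1 x]
  simp only [sg00, sg01, sg02, sg10, sg11, sg12, sg20, sg21, sg22, box,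
    schwarz hu 1 0 x, schwarz hu 2 0 x, schwarz hu 2 1 x]
  ring

lemma Yks_expand (u : (Fin 3 → ℝ) → ℝ) (x : Fin 3 → ℝ) :
    Yks u x =
      |pd 0 u x| + |pd 1 u x| + |pd 2 u x|
      + (|pd 0 (pd 0 u) x| + |pd 0 (pd 1 u) x| + |pd 0 (pd 2 u) x|
        + |pd 0 (dAng u) x| + |pd 0 (Lzero u) x|
        + |pd 1 (pd 0 u) x| + |pd 1 (pd 1 u) x| + |pd 1 (pd 2 u) x|
        + |pd 1 (dAng u) x| + |pd 1 (Lzero u) x|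
        + |pd 2 (pd 0 u) x| + |pd 2 (pd 1 u) x| + |pd 2 (pd 2 u) x|
        + |pd 2 (dAng u) x| + |pd 2 (Lzero u) x|)
      + (rr x + x 0) * |box u x| := by
  simp only [Yks, Fin.sum_univ_three, Fin.sum_univ_five, Gam,
    Matrix.cons_val_zero, Matrix.cons_val_one, Matrix.head_cons,
    Matrix.cons_val_two, Matrix.tail_cons, Matrix.cons_val_three, Matrix.cons_val_four]
  ring

lemma abs_sum7 (a1 a2 a3 a4 a5 a6 a7 : ℝ) :
    |a1 + a2 + a3 + a4 + a5 + a6 + a7| ≤ |a1| + |a2| + |a3| + |a4| + |a5| + |a6| + |a7| := by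
  linarith [abs_add_le a1 a2, abs_add_le (a1+a2) a3, abs_add_le (a1+a2+a3) a4,
    abs_add_le (a1+a2+a3+a4) a5, abs_add_le (a1+a2+a3+a4+a5) a6, abs_add_le (a1+a2+a3+a4+a5+a6) a7]

lemma abs_sum6 (a1 a2 a3 a4 a5 a6 : ℝ) :
    |a1 + a2 + a3 + a4 + a5 + a6| ≤ |a1| + |a2| + |a3| + |a4| + |a5| + |a6| := by
  linarith [abs_add_le a1 a2, abs_add_le (a1+a2) a3, abs_add_le (a1+a2+a3) a4,
    abs_add_le (a1+a2+a3+a4) a5, abs_add_le (a1+a2+a3+a4+a5) a6]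

lemma mulb {c w R Y : ℝ} (hc : |c| ≤ R) (hw : |w| ≤ Y) : |c * w| ≤ R * Y := by
  rw [abs_mul]
  exact mul_le_mul hc hw (abs_nonneg _) ((abs_nonneg c).trans hc)

lemma jb_le (s : ℝ) : jb s ≤ 1 + |s| := by
  have h : Real.sqrt (1 + s^2) ≤ Real.sqrt ((1 + |s|)^2) :=
    Real.sqrt_le_sqrt (by nlinarith [abs_nonneg s, sq_abs s])
  rwa [Real.sqrt_sq (by positivity)] at h

end KS2DProof

open KS2DProof in
/-- 2D Klainerman–Sideris estimate:
`⟨r-t⟩(|∂_{tt}ũ| + |∂_t∇ũ| + |Δũ|) ≲ Y` pointwise. -/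
theorem klainerman_sideris_2d :
    ∃ C : ℝ, 0 < C ∧
      ∀ (u : (Fin 3 → ℝ) → ℝ), ContDiff ℝ 2 u →
        ∀ x : Fin 3 → ℝ, 0 ≤ x 0 → 0 < rr x →
          jb (rr x - x 0) *
            (|pd 0 (pd 0 u) x| + |pd 0 (pd 1 u) x| + |pd 0 (pd 2 u) x| +
              |pd 1 (pd 1 u) x + pd 2 (pd 2 u) x|) ≤ C * Yks u x := by
  refine ⟨100, by norm_num, ?_⟩
  intro u hu x ht hr
  have hq : rr x ^ 2 = x 1 ^ 2 + x 2 ^ 2 := Real.sq_sqrt (by positivity)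
  have hrt : 0 < rr x + x 0 := by linarith
  have hx1 : |x 1| ≤ rr x := by
    rw [← Real.sqrt_sq_eq_abs]
    exact Real.sqrt_le_sqrt (by nlinarith [sq_nonneg (x 2)])
  have hx2 : |x 2| ≤ rr x := by
    rw [← Real.sqrt_sq_eq_abs]
    exact Real.sqrt_le_sqrt (by nlinarith [sq_nonneg (x 1)])
  have hYe := Yks_expand u x
  -- nonnegativity facts
  have hY0 : 0 ≤ Yks u x := by
    rw [hYe]
    positivity
  have hbox0 : 0 ≤ (rr x + x 0) * |box u x| := mul_nonneg hrt.le (abs_nonneg _)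
  -- individual terms bounded by Y
  have hextract : ∀ z : ℝ, (∃ w : ℝ, 0 ≤ w ∧ Yks u x = z + w) → z ≤ Yks u x := by
    rintro z ⟨w, hw, hzw⟩; linarith
  have hu0 : |pd 0 u x| ≤ Yks u x := by rw [hYe]; linarith [abs_nonneg (pd 0 u x), abs_nonneg (pd 1 u x), abs_nonneg (pd 2 u x), abs_nonneg (pd 0 (pd 0 u) x), abs_nonneg (pd 0 (pd 1 u) x), abs_nonneg (pd 0 (pd 2 u) x), abs_nonneg (pd 0 (dAng u) x), abs_nonneg (pd 0 (Lzero u) x), abs_nonneg (pd 1 (pd 0 u) x), abs_nonneg (pd 1 (pd 1 u) x), abs_nonneg (pd 1 (pd 2 u) x), abs_nonneg (pd 1 (dAng u) x), abs_nonneg (pd 1 (Lzero u) x), abs_nonneg (pd 2 (pd 0 u) x), abs_nonneg (pd 2 (pd 1 u) x), abs_nonneg (pd 2 (pd 2 u) x), abs_nonneg (pd 2 (dAng u) x), abs_nonneg (pd 2 (Lzero u) x), hbox0]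
  have hL0 : |pd 0 (Lzero u) x| ≤ Yks u x := by rw [hYe]; linarith [abs_nonneg (pd 0 u x), abs_nonneg (pd 1 u x), abs_nonneg (pd 2 u x), abs_nonneg (pd 0 (pd 0 u) x), abs_nonneg (pd 0 (pd 1 u) x), abs_nonneg (pd 0 (pd 2 u) x), abs_nonneg (pd 0 (dAng u) x), abs_nonneg (pd 0 (Lzero u) x), abs_nonneg (pd 1 (pd 0 u) x), abs_nonneg (pd 1 (pd 1 u) x), abs_nonneg (pd 1 (pd 2 u) x), abs_nonneg (pd 1 (dAng u) x), abs_nonneg (pd 1 (Lzero u) x), abs_nonneg (pd 2 (pd 0 u) x), abs_nonneg (pd 2 (pd 1 u) x), abs_nonneg (pd 2 (pd 2 u) x), abs_nonneg (pd 2 (dAng u) x), abs_nonneg (pd 2 (Lzero u) x), hbox0]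
  have hL1 : |pd 1 (Lzero u) x| ≤ Yks u x := by rw [hYe]; linarith [abs_nonneg (pd 0 u x), abs_nonneg (pd 1 u x), abs_nonneg (pd 2 u x), abs_nonneg (pd 0 (pd 0 u) x), abs_nonneg (pd 0 (pd 1 u) x), abs_nonneg (pd 0 (pd 2 u) x), abs_nonneg (pd 0 (dAng u) x), abs_nonneg (pd 0 (Lzero u) x), abs_nonneg (pd 1 (pd 0 u) x), abs_nonneg (pd 1 (pd 1 u) x), abs_nonneg (pd 1 (pd 2 u) x), abs_nonneg (pd 1 (dAng u) x), abs_nonneg (pd 1 (Lzero u) x), abs_nonneg (pd 2 (pd 0 u) x), abs_nonneg (pd 2 (pd 1 u) x), abs_nonneg (pd 2 (pd 2 u) x), abs_nonneg (pd 2 (dAng u) x), abs_nonneg (pd 2 (Lzero u) x), hbox0]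
  have hL2 : |pd 2 (Lzero u) x| ≤ Yks u x := by rw [hYe]; linarith [abs_nonneg (pd 0 u x), abs_nonneg (pd 1 u x), abs_nonneg (pd 2 u x), abs_nonneg (pd 0 (pd 0 u) x), abs_nonneg (pd 0 (pd 1 u) x), abs_nonneg (pd 0 (pd 2 u) x), abs_nonneg (pd 0 (dAng u) x), abs_nonneg (pd 0 (Lzero u) x), abs_nonneg (pd 1 (pd 0 u) x), abs_nonneg (pd 1 (pd 1 u) x), abs_nonneg (pd 1 (pd 2 u) x), abs_nonneg (pd 1 (dAng u) x), abs_nonneg (pd 1 (Lzero u) x), abs_nonneg (pd 2 (pd 0 u) x), abs_nonneg (pd 2 (pd 1 u) x), abs_nonneg (pd 2 (pd 2 u) x), abs_nonneg (pd 2 (dAng u) x), abs_nonneg (pd 2 (Lzero u) x), hbox0]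
  have hA0 : |pd 0 (dAng u) x| ≤ Yks u x := by rw [hYe]; linarith [abs_nonneg (pd 0 u x), abs_nonneg (pd 1 u x), abs_nonneg (pd 2 u x), abs_nonneg (pd 0 (pd 0 u) x), abs_nonneg (pd 0 (pd 1 u) x), abs_nonneg (pd 0 (pd 2 u) x), abs_nonneg (pd 0 (dAng u) x), abs_nonneg (pd 0 (Lzero u) x), abs_nonneg (pd 1 (pd 0 u) x), abs_nonneg (pd 1 (pd 1 u) x), abs_nonneg (pd 1 (pd 2 u) x), abs_nonneg (pd 1 (dAng u) x), abs_nonneg (pd 1 (Lzero u) x), abs_nonneg (pd 2 (pd 0 u) x), abs_nonneg (pd 2 (pd 1 u) x), abs_nonneg (pd 2 (pd 2 u) x), abs_nonneg (pd 2 (dAng u) x), abs_nonneg (pd 2 (Lzero u) x), hbox0]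
  have hA1 : |pd 1 (dAng u) x| ≤ Yks u x := by rw [hYe]; linarith [abs_nonneg (pd 0 u x), abs_nonneg (pd 1 u x), abs_nonneg (pd 2 u x), abs_nonneg (pd 0 (pd 0 u) x), abs_nonneg (pd 0 (pd 1 u) x), abs_nonneg (pd 0 (pd 2 u) x), abs_nonneg (pd 0 (dAng u) x), abs_nonneg (pd 0 (Lzero u) x), abs_nonneg (pd 1 (pd 0 u) x), abs_nonneg (pd 1 (pd 1 u) x), abs_nonneg (pd 1 (pd 2 u) x), abs_nonneg (pd 1 (dAng u) x), abs_nonneg (pd 1 (Lzero u) x), abs_nonneg (pd 2 (pd 0 u) x), abs_nonneg (pd 2 (pd 1 u) x), abs_nonneg (pd 2 (pd 2 u) x), abs_nonneg (pd 2 (dAng u) x), abs_nonneg (pd 2 (Lzero u) x), hbox0]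
  have hA2 : |pd 2 (dAng u) x| ≤ Yks u x := by rw [hYe]; linarith [abs_nonneg (pd 0 u x), abs_nonneg (pd 1 u x), abs_nonneg (pd 2 u x), abs_nonneg (pd 0 (pd 0 u) x), abs_nonneg (pd 0 (pd 1 u) x), abs_nonneg (pd 0 (pd 2 u) x), abs_nonneg (pd 0 (dAng u) x), abs_nonneg (pd 0 (Lzero u) x), abs_nonneg (pd 1 (pd 0 u) x), abs_nonneg (pd 1 (pd 1 u) x), abs_nonneg (pd 1 (pd 2 u) x), abs_nonneg (pd 1 (dAng u) x), abs_nonneg (pd 1 (Lzero u) x), abs_nonneg (pd 2 (pd 0 u) x), abs_nonneg (pd 2 (pd 1 u) x), abs_nonneg (pd 2 (pd 2 u) x), abs_nonneg (pd 2 (dAng u) x), abs_nonneg (pd 2 (Lzero u) x), hbox0]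
  have hD00 : |pd 0 (pd 0 u) x| ≤ Yks u x := by rw [hYe]; linarith [abs_nonneg (pd 0 u x), abs_nonneg (pd 1 u x), abs_nonneg (pd 2 u x), abs_nonneg (pd 0 (pd 0 u) x), abs_nonneg (pd 0 (pd 1 u) x), abs_nonneg (pd 0 (pd 2 u) x), abs_nonneg (pd 0 (dAng u) x), abs_nonneg (pd 0 (Lzero u) x), abs_nonneg (pd 1 (pd 0 u) x), abs_nonneg (pd 1 (pd 1 u) x), abs_nonneg (pd 1 (pd 2 u) x), abs_nonneg (pd 1 (dAng u) x), abs_nonneg (pd 1 (Lzero u) x), abs_nonneg (pd 2 (pd 0 u) x), abs_nonneg (pd 2 (pd 1 u) x), abs_nonneg (pd 2 (pd 2 u) x), abs_nonneg (pd 2 (dAng u) x), abs_nonneg (pd 2 (Lzero u) x), hbox0]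
  have hD01 : |pd 0 (pd 1 u) x| ≤ Yks u x := by rw [hYe]; linarith [abs_nonneg (pd 0 u x), abs_nonneg (pd 1 u x), abs_nonneg (pd 2 u x), abs_nonneg (pd 0 (pd 0 u) x), abs_nonneg (pd 0 (pd 1 u) x), abs_nonneg (pd 0 (pd 2 u) x), abs_nonneg (pd 0 (dAng u) x), abs_nonneg (pd 0 (Lzero u) x), abs_nonneg (pd 1 (pd 0 u) x), abs_nonneg (pd 1 (pd 1 u) x), abs_nonneg (pd 1 (pd 2 u) x), abs_nonneg (pd 1 (dAng u) x), abs_nonneg (pd 1 (Lzero u) x), abs_nonneg (pd 2 (pd 0 u) x), abs_nonneg (pd 2 (pd 1 u) x), abs_nonneg (pd 2 (pd 2 u) x), abs_nonneg (pd 2 (dAng u) x), abs_nonneg (pd 2 (Lzero u) x), hbox0]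
  have hD02 : |pd 0 (pd 2 u) x| ≤ Yks u x := by rw [hYe]; linarith [abs_nonneg (pd 0 u x), abs_nonneg (pd 1 u x), abs_nonneg (pd 2 u x), abs_nonneg (pd 0 (pd 0 u) x), abs_nonneg (pd 0 (pd 1 u) x), abs_nonneg (pd 0 (pd 2 u) x), abs_nonneg (pd 0 (dAng u) x), abs_nonneg (pd 0 (Lzero u) x), abs_nonneg (pd 1 (pd 0 u) x), abs_nonneg (pd 1 (pd 1 u) x), abs_nonneg (pd 1 (pd 2 u) x), abs_nonneg (pd 1 (dAng u) x), abs_nonneg (pd 1 (Lzero u) x), abs_nonneg (pd 2 (pd 0 u) x), abs_nonneg (pd 2 (pd 1 u) x), abs_nonneg (pd 2 (pd 2 u) x), abs_nonneg (pd 2 (dAng u) x), abs_nonneg (pd 2 (Lzero u) x), hbox0]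
  have hD11 : |pd 1 (pd 1 u) x| ≤ Yks u x := by rw [hYe]; linarith [abs_nonneg (pd 0 u x), abs_nonneg (pd 1 u x), abs_nonneg (pd 2 u x), abs_nonneg (pd 0 (pd 0 u) x), abs_nonneg (pd 0 (pd 1 u) x), abs_nonneg (pd 0 (pd 2 u) x), abs_nonneg (pd 0 (dAng u) x), abs_nonneg (pd 0 (Lzero u) x), abs_nonneg (pd 1 (pd 0 u) x), abs_nonneg (pd 1 (pd 1 u) x), abs_nonneg (pd 1 (pd 2 u) x), abs_nonneg (pd 1 (dAng u) x), abs_nonneg (pd 1 (Lzero u) x), abs_nonneg (pd 2 (pd 0 u) x), abs_nonneg (pd 2 (pd 1 u) x), abs_nonneg (pd 2 (pd 2 u) x), abs_nonneg (pd 2 (dAng u) x), abs_nonneg (pd 2 (Lzero u) x), hbox0]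
  have hD22 : |pd 2 (pd 2 u) x| ≤ Yks u x := by rw [hYe]; linarith [abs_nonneg (pd 0 u x), abs_nonneg (pd 1 u x), abs_nonneg (pd 2 u x), abs_nonneg (pd 0 (pd 0 u) x), abs_nonneg (pd 0 (pd 1 u) x), abs_nonneg (pd 0 (pd 2 u) x), abs_nonneg (pd 0 (dAng u) x), abs_nonneg (pd 0 (Lzero u) x), abs_nonneg (pd 1 (pd 0 u) x), abs_nonneg (pd 1 (pd 1 u) x), abs_nonneg (pd 1 (pd 2 u) x), abs_nonneg (pd 1 (dAng u) x), abs_nonneg (pd 1 (Lzero u) x), abs_nonneg (pd 2 (pd 0 u) x), abs_nonneg (pd 2 (pd 1 u) x), abs_nonneg (pd 2 (pd 2 u) x), abs_nonneg (pd 2 (dAng u) x), abs_nonneg (pd 2 (Lzero u) x), hbox0]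
  have hBox : (rr x + x 0) * |box u x| ≤ Yks u x := by rw [hYe]; linarith [abs_nonneg (pd 0 u x), abs_nonneg (pd 1 u x), abs_nonneg (pd 2 u x), abs_nonneg (pd 0 (pd 0 u) x), abs_nonneg (pd 0 (pd 1 u) x), abs_nonneg (pd 0 (pd 2 u) x), abs_nonneg (pd 0 (dAng u) x), abs_nonneg (pd 0 (Lzero u) x), abs_nonneg (pd 1 (pd 0 u) x), abs_nonneg (pd 1 (pd 1 u) x), abs_nonneg (pd 1 (pd 2 u) x), abs_nonneg (pd 1 (dAng u) x), abs_nonneg (pd 1 (Lzero u) x), abs_nonneg (pd 2 (pd 0 u) x), abs_nonneg (pd 2 (pd 1 u) x), abs_nonneg (pd 2 (pd 2 u) x), abs_nonneg (pd 2 (dAng u) x), abs_nonneg (pd 2 (Lzero u) x), hbox0]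
  -- coefficient bounds
  have hcx0 : |x 0| ≤ rr x + x 0 := by rw [abs_of_nonneg ht]; linarith
  have hcx0n : |(-(x 0))| ≤ rr x + x 0 := by rw [abs_neg, abs_of_nonneg ht]; linarith
  have hcx1 : |x 1| ≤ rr x + x 0 := by linarith
  have hcx1n : |(-(x 1))| ≤ rr x + x 0 := by rw [abs_neg]; linarith
  have hcx2 : |x 2| ≤ rr x + x 0 := by linarith
  have hcx2n : |(-(x 2))| ≤ rr x + x 0 := by rw [abs_neg]; linarith
  have hrbox : rr x * |box u x| ≤ Yks u x :=
    le_trans (mul_le_mul_of_nonneg_right (by linarith : rr x ≤ rr x + x 0) (abs_nonneg _)) hBox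
  -- box-term bounds
  have bqbox : |(-(x 1 ^ 2 + x 2 ^ 2)) * box u x| ≤ (rr x + x 0) * Yks u x := by
    rw [abs_mul, abs_neg, abs_of_nonneg (by positivity : (0:ℝ) ≤ x 1 ^ 2 + x 2 ^ 2), ← hq]
    calc rr x ^ 2 * |box u x| = rr x * (rr x * |box u x|) := by ring
      _ ≤ rr x * Yks u x := mul_le_mul_of_nonneg_left hrbox hr.le
      _ ≤ (rr x + x 0) * Yks u x := by linarith [mul_nonneg ht hY0]
  have bxx1box : |(x 0 * x 1) * box u x| ≤ (rr x + x 0) * Yks u x := by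
    rw [abs_mul, abs_mul, abs_of_nonneg ht]
    have e : x 0 * |x 1| * |box u x| = (x 0 * |box u x|) * |x 1| := by ring
    rw [e]
    calc (x 0 * |box u x|) * |x 1| ≤ (x 0 * |box u x|) * rr x :=
          mul_le_mul_of_nonneg_left hx1 (mul_nonneg ht (abs_nonneg _))
      _ = x 0 * (rr x * |box u x|) := by ring
      _ ≤ x 0 * Yks u x := mul_le_mul_of_nonneg_left hrbox ht
      _ ≤ (rr x + x 0) * Yks u x := by linarith [mul_nonneg hr.le hY0]
  have bxx2box : |(x 0 * x 2) * box u x| ≤ (rr x + x 0) * Yks u x := by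
    rw [abs_mul, abs_mul, abs_of_nonneg ht]
    have e : x 0 * |x 2| * |box u x| = (x 0 * |box u x|) * |x 2| := by ring
    rw [e]
    calc (x 0 * |box u x|) * |x 2| ≤ (x 0 * |box u x|) * rr x :=
          mul_le_mul_of_nonneg_left hx2 (mul_nonneg ht (abs_nonneg _))
      _ = x 0 * (rr x * |box u x|) := by ring
      _ ≤ x 0 * Yks u x := mul_le_mul_of_nonneg_left hrbox ht
      _ ≤ (rr x + x 0) * Yks u x := by linarith [mul_nonneg hr.le hY0]
  have eabs : |x 0 ^ 2 - (x 1 ^ 2 + x 2 ^ 2)| = |rr x - x 0| * (rr x + x 0) := by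
    rw [← hq, show x 0 ^ 2 - rr x ^ 2 = -((rr x - x 0) * (rr x + x 0)) by ring,
      abs_neg, abs_mul, abs_of_pos hrt]
  -- main weighted bounds
  have h70 : |(x 0 ^ 2 - (x 1 ^ 2 + x 2 ^ 2)) * pd 0 (pd 0 u) x|
      ≤ (rr x + x 0) * (7 * Yks u x) := by
    rw [key1 hu x]
    have tri := abs_sum7 (x 0 * pd 0 (Lzero u) x) ((-(x 0)) * pd 0 u x)
      ((-(x 1)) * pd 1 (Lzero u) x) ((-(x 2)) * pd 2 (Lzero u) x)
      ((-(x 1)) * pd 2 (dAng u) x) (x 2 * pd 1 (dAng u) x)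
      ((-(x 1 ^ 2 + x 2 ^ 2)) * box u x)
    have b1 := mulb hcx0 hL0
    have b2 := mulb hcx0n hu0
    have b3 := mulb hcx1n hL1
    have b4 := mulb hcx2n hL2
    have b5 := mulb hcx1n hA2
    have b6 := mulb hcx2 hA1
    linarith [bqbox]
  have conc0 : |rr x - x 0| * |pd 0 (pd 0 u) x| ≤ 7 * Yks u x := by
    rw [abs_mul, eabs] at h70
    have h2 : (rr x + x 0) * (|rr x - x 0| * |pd 0 (pd 0 u) x|)
        ≤ (rr x + x 0) * (7 * Yks u x) := by linarith [h70]
    exact le_of_mul_le_mul_left h2 hrt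
  have h61 : |(x 0 ^ 2 - (x 1 ^ 2 + x 2 ^ 2)) * pd 0 (pd 1 u) x|
      ≤ (rr x + x 0) * (6 * Yks u x) := by
    rw [key2 hu x]
    have tri := abs_sum6 (x 0 * pd 1 (Lzero u) x) ((-(x 1)) * pd 0 (Lzero u) x)
      (x 1 * pd 0 u x) (x 2 * pd 0 (dAng u) x) (x 0 * pd 2 (dAng u) x)
      ((x 0 * x 1) * box u x)
    have b1 := mulb hcx0 hL1
    have b2 := mulb hcx1n hL0
    have b3 := mulb hcx1 hu0
    have b4 := mulb hcx2 hA0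
    have b5 := mulb hcx0 hA2
    linarith [bxx1box]
  have conc1 : |rr x - x 0| * |pd 0 (pd 1 u) x| ≤ 6 * Yks u x := by
    rw [abs_mul, eabs] at h61
    have h2 : (rr x + x 0) * (|rr x - x 0| * |pd 0 (pd 1 u) x|)
        ≤ (rr x + x 0) * (6 * Yks u x) := by linarith [h61]
    exact le_of_mul_le_mul_left h2 hrt
  have h62 : |(x 0 ^ 2 - (x 1 ^ 2 + x 2 ^ 2)) * pd 0 (pd 2 u) x|
      ≤ (rr x + x 0) * (6 * Yks u x) := by
    rw [key3 hu x]
    have tri := abs_sum6 (x 0 * pd 2 (Lzero u) x) ((-(x 2)) * pd 0 (Lzero u) x)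
      (x 2 * pd 0 u x) ((-(x 1)) * pd 0 (dAng u) x) ((-(x 0)) * pd 1 (dAng u) x)
      ((x 0 * x 2) * box u x)
    have b1 := mulb hcx0 hL2
    have b2 := mulb hcx2n hL0
    have b3 := mulb hcx2 hu0
    have b4 := mulb hcx1n hA0
    have b5 := mulb hcx0n hA1
    linarith [bxx2box]
  have conc2 : |rr x - x 0| * |pd 0 (pd 2 u) x| ≤ 6 * Yks u x := by
    rw [abs_mul, eabs] at h62
    have h2 : (rr x + x 0) * (|rr x - x 0| * |pd 0 (pd 2 u) x|)
        ≤ (rr x + x 0) * (6 * Yks u x) := by linarith [h62]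
    exact le_of_mul_le_mul_left h2 hrt
  -- Laplacian
  have hDid : (x 0 ^ 2 - (x 1 ^ 2 + x 2 ^ 2)) * (pd 1 (pd 1 u) x + pd 2 (pd 2 u) x)
      = (x 0 ^ 2 - (x 1 ^ 2 + x 2 ^ 2)) * pd 0 (pd 0 u) x
        - (x 0 ^ 2 - (x 1 ^ 2 + x 2 ^ 2)) * box u x := by
    simp only [box]; ring
  have t2 : |(x 0 ^ 2 - (x 1 ^ 2 + x 2 ^ 2)) * box u x| ≤ (rr x + x 0) * Yks u x := by
    rw [abs_mul, eabs]
    have hd : |rr x - x 0| ≤ rr x + x 0 := abs_le.mpr ⟨by linarith, by linarith⟩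
    calc |rr x - x 0| * (rr x + x 0) * |box u x|
        = |rr x - x 0| * ((rr x + x 0) * |box u x|) := by ring
      _ ≤ |rr x - x 0| * Yks u x := mul_le_mul_of_nonneg_left hBox (abs_nonneg _)
      _ ≤ (rr x + x 0) * Yks u x := mul_le_mul_of_nonneg_right hd hY0
  have h8 : |(x 0 ^ 2 - (x 1 ^ 2 + x 2 ^ 2)) * (pd 1 (pd 1 u) x + pd 2 (pd 2 u) x)|
      ≤ (rr x + x 0) * (8 * Yks u x) := by
    rw [hDid]
    have tri := abs_sub ((x 0 ^ 2 - (x 1 ^ 2 + x 2 ^ 2)) * pd 0 (pd 0 u) x)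
      ((x 0 ^ 2 - (x 1 ^ 2 + x 2 ^ 2)) * box u x)
    linarith [h70, t2]
  have conc3 : |rr x - x 0| * |pd 1 (pd 1 u) x + pd 2 (pd 2 u) x| ≤ 8 * Yks u x := by
    rw [abs_mul, eabs] at h8
    have h2 : (rr x + x 0) * (|rr x - x 0| * |pd 1 (pd 1 u) x + pd 2 (pd 2 u) x|)
        ≤ (rr x + x 0) * (8 * Yks u x) := by linarith [h8]
    exact le_of_mul_le_mul_left h2 hrt
  -- final assembly
  have hS0 : (0:ℝ) ≤ |pd 0 (pd 0 u) x| + |pd 0 (pd 1 u) x| + |pd 0 (pd 2 u) x|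
      + |pd 1 (pd 1 u) x + pd 2 (pd 2 u) x| := by positivity
  have step1 : jb (rr x - x 0) *
      (|pd 0 (pd 0 u) x| + |pd 0 (pd 1 u) x| + |pd 0 (pd 2 u) x| +
        |pd 1 (pd 1 u) x + pd 2 (pd 2 u) x|)
      ≤ (1 + |rr x - x 0|) *
      (|pd 0 (pd 0 u) x| + |pd 0 (pd 1 u) x| + |pd 0 (pd 2 u) x| +
        |pd 1 (pd 1 u) x + pd 2 (pd 2 u) x|) :=
    mul_le_mul_of_nonneg_right (jb_le _) hS0
  have habsD : |pd 1 (pd 1 u) x + pd 2 (pd 2 u) x|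
      ≤ |pd 1 (pd 1 u) x| + |pd 2 (pd 2 u) x| := abs_add_le _ _
  linarith [step1, conc0, conc1, conc2, conc3, hD00, hD01, hD02, hD11, hD22,
    habsD, hY0, abs_nonneg (rr x - x 0)]

end
end

section
/- Under the hypotheses of the Klainerman–Sideris estimate (ũ ∈ C², Y = |∂Γ^{≤1}ũ| + (r+t)|□ũ|), in the exterior region r ≥ t/10 with t ≥ 1 one also controls all second derivatives: ⟨r-t⟩|∂²ũ(t,x)| ≲ Y(t,x), where ∂² includes all spatial-spatial second derivatives ∂_i∂_j, i,j ∈ {1,2}. -/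
noncomputable section

set_option maxHeartbeats 1000000 in
private lemma ks_mulb {p q P Q : ℝ} (hp : |p| ≤ P) (hq : |q| ≤ Q) : |p * q| ≤ P * Q := by
  rw [abs_mul]
  exact mul_le_mul hp hq (abs_nonneg q) ((abs_nonneg p).trans hp)

set_option maxHeartbeats 1000000 in
private lemma ks_arith {t c s r Y B D00 D01 D02 D10 D11 D12 D20 D21 D22 a0 a1 a2 b0 b1 b2 : ℝ}
    (hr2 : r ^ 2 = c ^ 2 + s ^ 2) (ht1 : 1 ≤ t) (htr : t ≤ 10 * r)
    (hs10 : D10 = D01) (hs20 : D20 = D02)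
    (hA0 : a0 = t * D00 + c * D01 + s * D02)
    (hA1 : a1 = t * D10 + c * D11 + s * D12)
    (hA2 : a2 = t * D20 + c * D21 + s * D22)
    (hB0 : b0 = c * D02 - s * D01)
    (hB1 : b1 = c * D12 - s * D11)
    (hB2 : b2 = c * D22 - s * D21)
    (hBox : B = D00 - D11 - D22)
    (hY : 0 ≤ Y)
    (ha0 : |a0| ≤ Y) (ha1 : |a1| ≤ Y) (ha2 : |a2| ≤ Y)
    (hb0 : |b0| ≤ Y) (hb1 : |b1| ≤ Y) (hb2 : |b2| ≤ Y)
    (hbx : (r + t) * |B| ≤ Y) :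
    |(r - t) * D00| ≤ 942 * Y ∧ |(r - t) * D01| ≤ 942 * Y ∧ |(r - t) * D02| ≤ 942 * Y ∧
      |(r - t) * D11| ≤ 942 * Y ∧ |(r - t) * D12| ≤ 942 * Y ∧ |(r - t) * D22| ≤ 942 * Y := by
  have hrpos : 0 < r := by linarith
  have hrtpos : 0 < r + t := by linarith
  have hr2pos : 0 < r ^ 2 := by positivity
  have hcr : |c| ≤ r := by nlinarith [sq_abs c, abs_nonneg c, sq_nonneg s]
  have hsr : |s| ≤ r := by nlinarith [sq_abs s, abs_nonneg s, sq_nonneg c]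
  have htabs : |t| ≤ 10 * r := by rw [abs_of_pos (by linarith)]; linarith
  have htabs' : |t| ≤ r + t := by rw [abs_of_pos (by linarith)]; linarith
  have hcrt : |c| ≤ r + t := by linarith
  have hsrt : |s| ≤ r + t := by linarith
  have hwr : |r - t| ≤ 11 * r := abs_le.2 ⟨by linarith, by linarith⟩
  have hwr' : |r - t| ≤ r + t := abs_le.2 ⟨by linarith, by linarith⟩
  have hbB : |(r - t) * B| ≤ Y := by
    calc |(r - t) * B| = |r - t| * |B| := abs_mul _ _
    _ ≤ (r + t) * |B| := mul_le_mul_of_nonneg_right hwr' (abs_nonneg _)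
    _ ≤ Y := hbx
  -- step 1 : the Laplacian and the time-time derivative
  have E1 : ((r + t) * (r - t)) * (D11 + D22)
      = c * a1 + s * a2 - t * a0 + c * b2 - s * b1 + t ^ 2 * B := by
    linear_combination (-c) * hA1 + (-s) * hA2 + t * hA0 + (-c) * hB2 + s * hB1
      + (-(t ^ 2)) * hBox + (D11 + D22) * hr2 + (-(c * t)) * hs10 + (-(s * t)) * hs20
  have hT1 : |c * a1| ≤ (r + t) * Y := ks_mulb hcrt ha1
  have hT2 : |s * a2| ≤ (r + t) * Y := ks_mulb hsrt ha2
  have hT3 : |t * a0| ≤ (r + t) * Y := ks_mulb htabs' ha0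
  have hT4 : |c * b2| ≤ (r + t) * Y := ks_mulb hcrt hb2
  have hT5 : |s * b1| ≤ (r + t) * Y := ks_mulb hsrt hb1
  have hT6 : |t ^ 2 * B| ≤ (r + t) * Y := by
    have h1 : |t * B| ≤ Y := by
      calc |t * B| = |t| * |B| := abs_mul _ _
      _ ≤ (r + t) * |B| := mul_le_mul_of_nonneg_right htabs' (abs_nonneg _)
      _ ≤ Y := hbx
    rw [show t ^ 2 * B = t * (t * B) by ring]
    exact ks_mulb htabs' h1
  obtain ⟨l1, r1⟩ := abs_le.1 hT1
  obtain ⟨l2, r2⟩ := abs_le.1 hT2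
  obtain ⟨l3, r3⟩ := abs_le.1 hT3
  obtain ⟨l4, r4⟩ := abs_le.1 hT4
  obtain ⟨l5, r5⟩ := abs_le.1 hT5
  obtain ⟨l6, r6⟩ := abs_le.1 hT6
  have hS1 : |c * a1 + s * a2 - t * a0 + c * b2 - s * b1 + t ^ 2 * B| ≤ (r + t) * (6 * Y) :=
    abs_le.2 ⟨by linarith, by linarith⟩
  have hstep1 : |(r - t) * (D11 + D22)| ≤ 6 * Y := by
    have h2 : (r + t) * |(r - t) * (D11 + D22)| ≤ (r + t) * (6 * Y) := by
      calc (r + t) * |(r - t) * (D11 + D22)| = |((r + t) * (r - t)) * (D11 + D22)| := by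
            rw [mul_assoc, abs_mul ((r + t)) ((r - t) * (D11 + D22)), abs_of_pos hrtpos]
      _ = |c * a1 + s * a2 - t * a0 + c * b2 - s * b1 + t ^ 2 * B| := by rw [E1]
      _ ≤ (r + t) * (6 * Y) := hS1
    exact le_of_mul_le_mul_left h2 hrtpos
  have hD00w : |(r - t) * D00| ≤ 7 * Y := by
    have e : (r - t) * D00 = (r - t) * (D11 + D22) + (r - t) * B := by
      rw [hBox]; ring
    rw [e]
    calc |(r - t) * (D11 + D22) + (r - t) * B|
        ≤ |(r - t) * (D11 + D22)| + |(r - t) * B| := abs_add_le _ _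
    _ ≤ 7 * Y := by linarith
  -- generic machinery for the remaining derivatives
  have step : ∀ (p q v w K c1 c2 c3 : ℝ), |p| ≤ Y → |q| ≤ Y → |(r - t) * v| ≤ K * Y → 0 ≤ K →
      |c1| ≤ r → |c2| ≤ r → |c3| ≤ 10 * r ^ 2 →
      r ^ 2 * ((r - t) * w) = c1 * ((r - t) * p) + c2 * ((r - t) * q) + c3 * ((r - t) * v) →
      |(r - t) * w| ≤ (22 + 10 * K) * Y := by
    intro p q v w K c1 c2 c3 hp hq hv hK h1 h2 h3 hE
    have u1 : |c1 * ((r - t) * p)| ≤ 11 * (r ^ 2 * Y) := by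
      calc |c1 * ((r - t) * p)| ≤ r * ((11 * r) * Y) := ks_mulb h1 (ks_mulb hwr hp)
      _ = 11 * (r ^ 2 * Y) := by ring
    have u2 : |c2 * ((r - t) * q)| ≤ 11 * (r ^ 2 * Y) := by
      calc |c2 * ((r - t) * q)| ≤ r * ((11 * r) * Y) := ks_mulb h2 (ks_mulb hwr hq)
      _ = 11 * (r ^ 2 * Y) := by ring
    have u3 : |c3 * ((r - t) * v)| ≤ (10 * K) * (r ^ 2 * Y) := by
      calc |c3 * ((r - t) * v)| ≤ (10 * r ^ 2) * (K * Y) := ks_mulb h3 hv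
      _ = (10 * K) * (r ^ 2 * Y) := by ring
    obtain ⟨m1, n1⟩ := abs_le.1 u1
    obtain ⟨m2, n2⟩ := abs_le.1 u2
    obtain ⟨m3, n3⟩ := abs_le.1 u3
    have hry : 0 ≤ r ^ 2 * Y := by positivity
    have hs : |c1 * ((r - t) * p) + c2 * ((r - t) * q) + c3 * ((r - t) * v)|
        ≤ (22 + 10 * K) * (r ^ 2 * Y) := abs_le.2 ⟨by linarith, by linarith⟩
    have h2' : r ^ 2 * |(r - t) * w| ≤ r ^ 2 * ((22 + 10 * K) * Y) := by
      calc r ^ 2 * |(r - t) * w| = |r ^ 2 * ((r - t) * w)| :=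
            ((by rw [abs_mul, abs_of_pos hr2pos] :
              |r ^ 2 * ((r - t) * w)| = r ^ 2 * |(r - t) * w|)).symm
      _ = |c1 * ((r - t) * p) + c2 * ((r - t) * q) + c3 * ((r - t) * v)| := by rw [hE]
      _ ≤ (22 + 10 * K) * (r ^ 2 * Y) := hs
      _ = r ^ 2 * ((22 + 10 * K) * Y) := by ring
    exact le_of_mul_le_mul_left h2' hr2pos
  have hct : |(-(c * t))| ≤ 10 * r ^ 2 := by
    rw [abs_neg]
    calc |c * t| ≤ r * (10 * r) := ks_mulb hcr htabs
    _ = 10 * r ^ 2 := by ring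
  have hst : |(-(s * t))| ≤ 10 * r ^ 2 := by
    rw [abs_neg]
    calc |s * t| ≤ r * (10 * r) := ks_mulb hsr htabs
    _ = 10 * r ^ 2 := by ring
  have hnegs : |(-s)| ≤ r := by rwa [abs_neg]
  -- D01
  have E2 : r ^ 2 * ((r - t) * D01)
      = c * ((r - t) * a0) + (-s) * ((r - t) * b0) + (-(c * t)) * ((r - t) * D00) := by
    linear_combination (-(c * (r - t))) * hA0 + (s * (r - t)) * hB0 + ((r - t) * D01) * hr2
  have hD01w : |(r - t) * D01| ≤ (22 + 10 * 7) * Y :=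
    step a0 b0 D00 D01 7 c (-s) (-(c * t)) ha0 hb0 hD00w (by norm_num) hcr hnegs hct E2
  -- D02
  have E3 : r ^ 2 * ((r - t) * D02)
      = s * ((r - t) * a0) + c * ((r - t) * b0) + (-(s * t)) * ((r - t) * D00) := by
    linear_combination (-(s * (r - t))) * hA0 + (-(c * (r - t))) * hB0 + ((r - t) * D02) * hr2
  have hD02w : |(r - t) * D02| ≤ (22 + 10 * 7) * Y :=
    step a0 b0 D00 D02 7 s c (-(s * t)) ha0 hb0 hD00w (by norm_num) hsr hcr hst E3
  have hD01w' : |(r - t) * D01| ≤ 92 * Y := by linarith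
  have hD02w' : |(r - t) * D02| ≤ 92 * Y := by linarith
  -- D11
  have E4 : r ^ 2 * ((r - t) * D11)
      = c * ((r - t) * a1) + (-s) * ((r - t) * b1) + (-(c * t)) * ((r - t) * D01) := by
    linear_combination (-(c * (r - t))) * hA1 + (s * (r - t)) * hB1 + ((r - t) * D11) * hr2
      + (-(c * t * (r - t))) * hs10
  have hD11w : |(r - t) * D11| ≤ (22 + 10 * 92) * Y :=
    step a1 b1 D01 D11 92 c (-s) (-(c * t)) ha1 hb1 hD01w' (by norm_num) hcr hnegs hct E4
  -- D12
  have E5 : r ^ 2 * ((r - t) * D12)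
      = s * ((r - t) * a1) + c * ((r - t) * b1) + (-(s * t)) * ((r - t) * D01) := by
    linear_combination (-(s * (r - t))) * hA1 + (-(c * (r - t))) * hB1 + ((r - t) * D12) * hr2
      + (-(s * t * (r - t))) * hs10
  have hD12w : |(r - t) * D12| ≤ (22 + 10 * 92) * Y :=
    step a1 b1 D01 D12 92 s c (-(s * t)) ha1 hb1 hD01w' (by norm_num) hsr hcr hst E5
  -- D22
  have E6 : r ^ 2 * ((r - t) * D22)
      = s * ((r - t) * a2) + c * ((r - t) * b2) + (-(s * t)) * ((r - t) * D02) := by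
    linear_combination (-(s * (r - t))) * hA2 + (-(c * (r - t))) * hB2 + ((r - t) * D22) * hr2
      + (-(s * t * (r - t))) * hs20
  have hD22w : |(r - t) * D22| ≤ (22 + 10 * 92) * Y :=
    step a2 b2 D02 D22 92 s c (-(s * t)) ha2 hb2 hD02w' (by norm_num) hsr hcr hst E6
  refine ⟨by linarith, by linarith, by linarith, by linarith, by linarith, by linarith⟩

private lemma ks_pd_contDiff {u : (Fin 3 → ℝ) → ℝ} (hu : ContDiff ℝ 2 u) (j : Fin 3) :
    ContDiff ℝ 1 (pd j u) := by
  have h := hu.fderiv_right (m := 1) (by norm_num)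
  exact h.clm_apply contDiff_const

private lemma ks_pd_symm {u : (Fin 3 → ℝ) → ℝ} (hu : ContDiff ℝ 2 u) (i j : Fin 3)
    (x : Fin 3 → ℝ) : pd i (pd j u) x = pd j (pd i u) x := by
  have h := (hu.contDiffAt (x := x)).isSymmSndFDerivAt (by norm_num)
  have hd : DifferentiableAt ℝ (fderiv ℝ u) x := by
    have := hu.fderiv_right (m := 1) (le_refl _)
    exact (this.differentiable one_ne_zero).differentiableAt
  have e : ∀ v w : Fin 3 → ℝ, fderiv ℝ (fun y => fderiv ℝ u y v) x w
      = fderiv ℝ (fderiv ℝ u) x w v := by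
    intro v w
    rw [fderiv_clm_apply hd (differentiableAt_const v)]
    simp
  show fderiv ℝ (fun y => fderiv ℝ u y (Pi.single j 1)) x (Pi.single i 1) = _
  rw [e, h, ← e]
  rfl

private def ks_prj (i : Fin 3) : (Fin 3 → ℝ) →L[ℝ] ℝ := ContinuousLinearMap.proj i

private lemma ks_mul_coord_hasFDeriv {u : (Fin 3 → ℝ) → ℝ} (hu : ContDiff ℝ 2 u) (i j : Fin 3)
    (x : Fin 3 → ℝ) :
    HasFDerivAt (fun y => y i * pd j u y)
      ((x i) • (fderiv ℝ (pd j u) x) + (pd j u x) • (ks_prj i)) x := by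
  exact ((ks_prj i).hasFDerivAt).mul
    (((ks_pd_contDiff hu j).differentiable one_ne_zero).differentiableAt.hasFDerivAt)

private lemma ks_pd_Lzero {u : (Fin 3 → ℝ) → ℝ} (hu : ContDiff ℝ 2 u) (k : Fin 3)
    (x : Fin 3 → ℝ) :
    pd k (Lzero u) x = (Pi.single k 1 : Fin 3 → ℝ) 0 * pd 0 u x
      + (Pi.single k 1 : Fin 3 → ℝ) 1 * pd 1 u x
      + (Pi.single k 1 : Fin 3 → ℝ) 2 * pd 2 u x
      + x 0 * pd k (pd 0 u) x + x 1 * pd k (pd 1 u) x + x 2 * pd k (pd 2 u) x := by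
  have h := ((ks_mul_coord_hasFDeriv hu 0 0 x).add (ks_mul_coord_hasFDeriv hu 1 1 x)).add
    (ks_mul_coord_hasFDeriv hu 2 2 x)
  have e : pd k (Lzero u) x = _ := congrFun (congrArg _ h.fderiv) (Pi.single k 1)
  rw [e]
  simp [pd, ks_prj]
  ring

private lemma ks_pd_dAng {u : (Fin 3 → ℝ) → ℝ} (hu : ContDiff ℝ 2 u) (k : Fin 3)
    (x : Fin 3 → ℝ) :
    pd k (dAng u) x = (Pi.single k 1 : Fin 3 → ℝ) 1 * pd 2 u x
      - (Pi.single k 1 : Fin 3 → ℝ) 2 * pd 1 u x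
      + x 1 * pd k (pd 2 u) x - x 2 * pd k (pd 1 u) x := by
  have h := (ks_mul_coord_hasFDeriv hu 1 2 x).sub (ks_mul_coord_hasFDeriv hu 2 1 x)
  have e : pd k (dAng u) x = _ := congrFun (congrArg _ h.fderiv) (Pi.single k 1)
  rw [e]
  simp [pd, ks_prj]
  ring

private lemma ks_jb_le (s : ℝ) : jb s ≤ 1 + |s| := by
  have h : 1 + s ^ 2 ≤ (1 + |s|) ^ 2 := by nlinarith [abs_nonneg s, sq_abs s]
  have h2 : Real.sqrt ((1 + |s|) ^ 2) = 1 + |s| := Real.sqrt_sq (by positivity)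
  calc jb s = Real.sqrt (1 + s ^ 2) := rfl
  _ ≤ Real.sqrt ((1 + |s|) ^ 2) := Real.sqrt_le_sqrt h
  _ = 1 + |s| := h2

set_option maxHeartbeats 2000000
/-- Klainerman–Sideris estimate in the exterior region `r ≥ t/10`, `t ≥ 1`:
all second derivatives are controlled, `⟨r-t⟩|∂²ũ| ≲ Y`. -/
theorem klainerman_sideris_2d_exterior :
    ∃ C : ℝ, 0 < C ∧
      ∀ (u : (Fin 3 → ℝ) → ℝ), ContDiff ℝ 2 u →
        ∀ x : Fin 3 → ℝ, 1 ≤ x 0 → x 0 / 10 ≤ rr x →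
          ∀ i j : Fin 3,
            jb (rr x - x 0) * |pd i (pd j u) x| ≤ C * Yks u x := by
  refine ⟨1000, by norm_num, ?_⟩
  intro u hu x ht hrx i j
  have hr0 : 0 ≤ rr x := Real.sqrt_nonneg _
  have hr2 : rr x ^ 2 = (x 1) ^ 2 + (x 2) ^ 2 := Real.sq_sqrt (by positivity)
  have htr : x 0 ≤ 10 * rr x := by linarith
  -- pieces of Y
  have hS1 : ∀ k : Fin 3, |pd k u x| ≤ ∑ k : Fin 3, |pd k u x| := fun k =>
    Finset.single_le_sum (f := fun k : Fin 3 => |pd k u x|) (fun _ _ => abs_nonneg _)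
      (Finset.mem_univ k)
  have hS2 : ∀ (k : Fin 3) (a : Fin 5),
      |pd k (Gam a u) x| ≤ ∑ k : Fin 3, ∑ a : Fin 5, |pd k (Gam a u) x| := by
    intro k a
    calc |pd k (Gam a u) x| ≤ ∑ a : Fin 5, |pd k (Gam a u) x| :=
        Finset.single_le_sum (f := fun a : Fin 5 => |pd k (Gam a u) x|)
          (fun _ _ => abs_nonneg _) (Finset.mem_univ a)
    _ ≤ ∑ k : Fin 3, ∑ a : Fin 5, |pd k (Gam a u) x| :=
        Finset.single_le_sum (f := fun k => ∑ a : Fin 5, |pd k (Gam a u) x|)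
          (fun _ _ => Finset.sum_nonneg fun _ _ => abs_nonneg _) (Finset.mem_univ k)
  have hs1nn : 0 ≤ ∑ k : Fin 3, |pd k u x| := Finset.sum_nonneg fun _ _ => abs_nonneg _
  have hs2nn : 0 ≤ ∑ k : Fin 3, ∑ a : Fin 5, |pd k (Gam a u) x| :=
    Finset.sum_nonneg fun _ _ => Finset.sum_nonneg fun _ _ => abs_nonneg _
  have h3nn : 0 ≤ (rr x + x 0) * |box u x| := mul_nonneg (by linarith) (abs_nonneg _)
  have hYsplit : Yks u x = (∑ k : Fin 3, |pd k u x|)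
      + (∑ k : Fin 3, ∑ a : Fin 5, |pd k (Gam a u) x|) + (rr x + x 0) * |box u x| := rfl
  have hY0 : 0 ≤ Yks u x := by rw [hYsplit]; linarith
  have hbx : (rr x + x 0) * |box u x| ≤ Yks u x := by rw [hYsplit]; linarith
  -- bounds on a_k
  have haY : ∀ k : Fin 3, |pd k (Lzero u) x - pd k u x| ≤ Yks u x := by
    intro k
    have h1 : |pd k (Lzero u) x| ≤ ∑ k : Fin 3, ∑ a : Fin 5, |pd k (Gam a u) x| := by
      have := hS2 k 4
      rwa [show Gam 4 = Lzero from rfl] at this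
    have h2 := hS1 k
    calc |pd k (Lzero u) x - pd k u x| ≤ |pd k (Lzero u) x| + |pd k u x| := abs_sub _ _
    _ ≤ Yks u x := by rw [hYsplit]; linarith
  have hdY : ∀ k : Fin 3, |pd k (dAng u) x| ≤ ∑ k : Fin 3, ∑ a : Fin 5, |pd k (Gam a u) x| := by
    intro k
    have := hS2 k 3
    rwa [show Gam 3 = dAng from rfl] at this
  have hb1Y : |pd 1 (dAng u) x - pd 2 u x| ≤ Yks u x := by
    have h1 := hdY 1
    have h2 := hS1 2
    calc |pd 1 (dAng u) x - pd 2 u x| ≤ |pd 1 (dAng u) x| + |pd 2 u x| := abs_sub _ _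
    _ ≤ Yks u x := by rw [hYsplit]; linarith
  have hb2Y : |pd 2 (dAng u) x + pd 1 u x| ≤ Yks u x := by
    have h1 := hdY 2
    have h2 := hS1 1
    calc |pd 2 (dAng u) x + pd 1 u x| ≤ |pd 2 (dAng u) x| + |pd 1 u x| := abs_add_le _ _
    _ ≤ Yks u x := by rw [hYsplit]; linarith
  have hb0Y : |pd 0 (dAng u) x| ≤ Yks u x := by
    have h1 := hdY 0
    rw [hYsplit]; linarith [abs_nonneg (pd 0 (dAng u) x)]
  have hDb : ∀ i' j' : Fin 3, |pd i' (pd j' u) x| ≤ Yks u x := by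
    intro i' j'
    have h1 : |pd i' (pd j' u) x| ≤ ∑ k : Fin 3, ∑ a : Fin 5, |pd k (Gam a u) x| := by
      fin_cases j'
      · have := hS2 i' 0; rwa [show Gam 0 = pd 0 from rfl] at this
      · have := hS2 i' 1; rwa [show Gam 1 = pd 1 from rfl] at this
      · have := hS2 i' 2; rwa [show Gam 2 = pd 2 from rfl] at this
    rw [hYsplit]; linarith
  -- structural identities
  have hA0 : pd 0 (Lzero u) x - pd 0 u x
      = x 0 * pd 0 (pd 0 u) x + x 1 * pd 0 (pd 1 u) x + x 2 * pd 0 (pd 2 u) x := by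
    have h := ks_pd_Lzero hu 0 x
    simp [Pi.single_apply] at h
    linarith
  have hA1 : pd 1 (Lzero u) x - pd 1 u x
      = x 0 * pd 1 (pd 0 u) x + x 1 * pd 1 (pd 1 u) x + x 2 * pd 1 (pd 2 u) x := by
    have h := ks_pd_Lzero hu 1 x
    simp [Pi.single_apply] at h
    linarith
  have hA2 : pd 2 (Lzero u) x - pd 2 u x
      = x 0 * pd 2 (pd 0 u) x + x 1 * pd 2 (pd 1 u) x + x 2 * pd 2 (pd 2 u) x := by
    have h := ks_pd_Lzero hu 2 x
    simp [Pi.single_apply] at h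
    linarith
  have hB0 : pd 0 (dAng u) x = x 1 * pd 0 (pd 2 u) x - x 2 * pd 0 (pd 1 u) x := by
    have h := ks_pd_dAng hu 0 x
    simp [Pi.single_apply] at h
    linarith
  have hB1 : pd 1 (dAng u) x - pd 2 u x = x 1 * pd 1 (pd 2 u) x - x 2 * pd 1 (pd 1 u) x := by
    have h := ks_pd_dAng hu 1 x
    simp [Pi.single_apply] at h
    linarith
  have hB2 : pd 2 (dAng u) x + pd 1 u x = x 1 * pd 2 (pd 2 u) x - x 2 * pd 2 (pd 1 u) x := by
    have h := ks_pd_dAng hu 2 x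
    simp [Pi.single_apply] at h
    linarith
  have hBox : box u x = pd 0 (pd 0 u) x - pd 1 (pd 1 u) x - pd 2 (pd 2 u) x := rfl
  obtain ⟨k00, k01, k02, k11, k12, k22⟩ :=
    ks_arith hr2 ht htr (ks_pd_symm hu 1 0 x) (ks_pd_symm hu 2 0 x)
      hA0 hA1 hA2 hB0 hB1 hB2 hBox hY0 (haY 0) (haY 1) (haY 2) hb0Y hb1Y hb2Y hbx
  have final : ∀ i' j' : Fin 3, |(rr x - x 0) * pd i' (pd j' u) x| ≤ 942 * Yks u x →
      jb (rr x - x 0) * |pd i' (pd j' u) x| ≤ 1000 * Yks u x := by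
    intro i' j' hk
    calc jb (rr x - x 0) * |pd i' (pd j' u) x|
        ≤ (1 + |rr x - x 0|) * |pd i' (pd j' u) x| :=
          mul_le_mul_of_nonneg_right (ks_jb_le _) (abs_nonneg _)
    _ = |pd i' (pd j' u) x| + |(rr x - x 0) * pd i' (pd j' u) x| := by rw [abs_mul]; ring
    _ ≤ Yks u x + 942 * Yks u x := add_le_add (hDb i' j') hk
    _ ≤ 1000 * Yks u x := by linarith
  have k10 : |(rr x - x 0) * pd 1 (pd 0 u) x| ≤ 942 * Yks u x := by
    rw [ks_pd_symm hu 1 0 x]; exact k01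
  have k20 : |(rr x - x 0) * pd 2 (pd 0 u) x| ≤ 942 * Yks u x := by
    rw [ks_pd_symm hu 2 0 x]; exact k02
  have k21 : |(rr x - x 0) * pd 2 (pd 1 u) x| ≤ 942 * Yks u x := by
    rw [ks_pd_symm hu 2 1 x]; exact k12
  fin_cases i <;> fin_cases j
  · exact final 0 0 k00
  · exact final 0 1 k01
  · exact final 0 2 k02
  · exact final 1 0 k10
  · exact final 1 1 k11
  · exact final 1 2 k12
  · exact final 2 0 k20
  · exact final 2 1 k21
  · exact final 2 2 k22

end
end
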